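/- Let n ≥ 1 and s, ε : ℤ/n → {±1} be cyclic sequences. For β ∈ {±1}^{ℤ/n}, define I_β = {i : β_i = ε_{i+1}·s_i and β_{i+1} = -ε_i·s_i} and d_β = ∑_{i ∈ I_β} s_i·β_i·β_{i+1}. Then d_{-β} = d_β for all β, where -β denotes the sequence with all signs flipped. -/
import Mathlib


/-- `I_β = {i : β i = ε (i+1) · s i ∧ β (i+1) = -(ε i · s i)}` and
`d_β = ∑_{i ∈ I_β} s i · β i · β (i+1)`, for cyclic sign sequences indexed by `ℤ/n`. -/
def dCoeff (n : ℕ) [NeZero n] (s ε β : ZMod n → ℤ) : ℤ :=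
  ∑ i ∈ Finset.univ.filter
      (fun i : ZMod n => β i = ε (i + 1) * s i ∧ β (i + 1) = -(ε i * s i)),
    s i * β i * β (i + 1)

/-- For cyclic sign sequences `s, ε, β : ℤ/n → {±1}` (`n ≥ 1`), the quantity
`d_β` satisfies `d_{-β} = d_β`. -/
theorem stmt_15 (n : ℕ) [NeZero n] (s ε β : ZMod n → ℤ)
    (hs : ∀ i, s i = 1 ∨ s i = -1) (hε : ∀ i, ε i = 1 ∨ ε i = -1)
    (hβ : ∀ i, β i = 1 ∨ β i = -1) :
    dCoeff n s ε (fun i => -β i) = dCoeff n s ε β := by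
  have key : ∀ i : ZMod n,
      2 * ((if (-β i = ε (i+1) * s i ∧ -β (i+1) = -(ε i * s i))
              then s i * (-β i) * (-β (i+1)) else 0)
        - (if (β i = ε (i+1) * s i ∧ β (i+1) = -(ε i * s i))
              then s i * β i * β (i+1) else 0))
      = ε i * β i - ε (i+1) * β (i+1) := by
    intro i
    rcases hs i with h1|h1 <;> rcases hε i with h2|h2 <;> rcases hε (i+1) with h3|h3 <;>
      rcases hβ i with h4|h4 <;> rcases hβ (i+1) with h5|h5 <;>
      simp [h1, h2, h3, h4, h5]
  have hsum : ∑ i : ZMod n, (ε i * β i - ε (i+1) * β (i+1)) = 0 := by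
    rw [Finset.sum_sub_distrib, sub_eq_zero]
    exact Fintype.sum_equiv (Equiv.subRight 1) _ _ (fun i => by simp)
  have htot : 2 * (dCoeff n s ε (fun i => -β i) - dCoeff n s ε β) = 0 := by
    have h2 : 2 * (dCoeff n s ε (fun i => -β i) - dCoeff n s ε β)
        = ∑ i : ZMod n, (ε i * β i - ε (i+1) * β (i+1)) := by
      unfold dCoeff
      rw [Finset.sum_filter, Finset.sum_filter, ← Finset.sum_sub_distrib,
        Finset.mul_sum]
      exact Finset.sum_congr rfl (fun i _ => key i)
    rw [h2, hsum]
  have := mul_eq_zero.mp htot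
  omega
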